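/- arXiv:1204.4987 — 2 statements merged into one kernel-verified Lean document; each statement's English description precedes it below -/
import Mathlib

section
/- For b₀<0, the Gerstner map Φ(t):(a,b)↦(x(t,a,b),z(t,a,b)) is injective on ℝ×(-∞,b₀]. -/
/-!
With `w = a + ib`, the Gerstner map is `w ↦ w + (i/k) exp(ik(w̄ - ct))`. Since
`|exp(ik(w̄ - ct))| = e^{kb}`, the perturbation of the identity is Lipschitz with constant
`e^{kb₀} < 1` on the half-plane `Im w ≤ b₀`, so two points with the same image coincide.
-/

open Complex ComplexConjugate

theorem injOn_of_norm_sub_sub_le {E : Type*} [NormedAddCommGroup E] {f : E → E} {s : Set E}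
    {K : ℝ} (hK : K < 1) (hf : ∀ x ∈ s, ∀ y ∈ s, ‖(f x - x) - (f y - y)‖ ≤ K * ‖x - y‖) :
    Set.InjOn f s := by
  intro x hx y hy hxy
  have hle : ‖x - y‖ ≤ K * ‖x - y‖ := by
    simpa only [hxy, sub_sub_sub_cancel_left, norm_sub_rev y x] using hf x hx y hy
  have hzero : ‖x - y‖ = 0 := by nlinarith [norm_nonneg (x - y)]
  exact sub_eq_zero.1 (norm_eq_zero.1 hzero)

theorem Complex.norm_exp_sub_exp_le {r : ℝ} {z w : ℂ} (hz : z.re ≤ r) (hw : w.re ≤ r) :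
    ‖exp z - exp w‖ ≤ Real.exp r * ‖z - w‖ :=
  (convex_halfSpace_re_le r).norm_image_sub_le_of_norm_hasDerivWithin_le
    (fun x _ => (hasDerivAt_exp x).hasDerivWithinAt)
    (fun x hx => by rw [norm_exp]; exact Real.exp_le_exp.2 hx) hw hz

noncomputable def gerstnerMap (k c t : ℝ) (w : ℂ) : ℂ :=
  w + I / k * exp (I * k * (conj w - c * t))

theorem gerstnerMap_re (k c t a b : ℝ) :
    (gerstnerMap k c t ⟨a, b⟩).re = a - Real.exp (k * b) / k * Real.sin (k * a - k * c * t) := by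
  simp [gerstnerMap, exp_re, exp_im, mul_sub, div_mul_eq_mul_div, neg_div, mul_assoc,
    ← sub_eq_add_neg]

theorem gerstnerMap_im (k c t a b : ℝ) :
    (gerstnerMap k c t ⟨a, b⟩).im = b + Real.exp (k * b) / k * Real.cos (k * a - k * c * t) := by
  simp [gerstnerMap, exp_re, exp_im, mul_sub, div_mul_eq_mul_div, mul_assoc]

theorem norm_gerstnerMap_sub_sub_le {k : ℝ} (hk : 0 < k) (c t : ℝ) {b₀ : ℝ} {w w' : ℂ}
    (hw : w.im ≤ b₀) (hw' : w'.im ≤ b₀) :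
    ‖(gerstnerMap k c t w - w) - (gerstnerMap k c t w' - w')‖ ≤ Real.exp (k * b₀) * ‖w - w'‖ := by
  have hre : ∀ v : ℂ, v.im ≤ b₀ → (I * k * (conj v - c * t)).re ≤ k * b₀ := fun v hv => by
    simpa using mul_le_mul_of_nonneg_left hv hk.le
  have hdiff : I * k * (conj w - c * t) - I * k * (conj w' - c * t) = I * k * conj (w - w') := by
    rw [map_sub]; ring
  calc ‖(gerstnerMap k c t w - w) - (gerstnerMap k c t w' - w')‖
      = ‖exp (I * k * (conj w - c * t)) - exp (I * k * (conj w' - c * t))‖ / k := by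
        simp only [gerstnerMap, add_sub_cancel_left, ← mul_sub, norm_mul, norm_div, norm_I,
          norm_real, Real.norm_of_nonneg hk.le]
        ring
    _ ≤ Real.exp (k * b₀) * ‖I * k * conj (w - w')‖ / k := by
        rw [← hdiff]
        gcongr
        exact norm_exp_sub_exp_le (hre w hw) (hre w' hw')
    _ = Real.exp (k * b₀) * ‖w - w'‖ := by
        rw [norm_mul, norm_mul, norm_I, norm_real, Real.norm_of_nonneg hk.le, RCLike.norm_conj]
        field_simp

theorem gerstnerMap_injOn {k : ℝ} (hk : 0 < k) (c t : ℝ) {b₀ : ℝ} (hb₀ : b₀ < 0) :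
    Set.InjOn (gerstnerMap k c t) {w | w.im ≤ b₀} := by
  have hK : Real.exp (k * b₀) < 1 := Real.exp_lt_one_iff.2 (mul_neg_of_pos_of_neg hk hb₀)
  exact injOn_of_norm_sub_sub_le hK fun w hw w' hw' => norm_gerstnerMap_sub_sub_le hk c t hw hw'

/-- For `b₀ < 0` the Gerstner map `Φ(t)` is injective on `ℝ × (-∞, b₀]`. -/
theorem gerstner_injective (k c t b₀ : ℝ) (hk : 0 < k) (hb₀ : b₀ < 0) :
    Set.InjOn (fun p : ℝ × ℝ =>
        (p.1 - Real.exp (k * p.2) / k * Real.sin (k * p.1 - k * c * t),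
         p.2 + Real.exp (k * p.2) / k * Real.cos (k * p.1 - k * c * t)))
      {p : ℝ × ℝ | p.2 ≤ b₀} := by
  rintro ⟨a, b⟩ hab ⟨a', b'⟩ hab' h
  obtain ⟨hre, him⟩ := Prod.mk.inj h
  have hw : (⟨a, b⟩ : ℂ) = ⟨a', b'⟩ := gerstnerMap_injOn hk c t hb₀ hab hab' <|
    Complex.ext (by simpa only [gerstnerMap_re] using hre)
      (by simpa only [gerstnerMap_im] using him)
  simpa using hw
end

section
/- The vorticity γ=u_z-w_x of the Gerstner flow, computed in Lagrangian variables via γ=x_{ta}a_z+x_{tb}b_z-z_{ta}a_x-z_{tb}b_x, equals -2kce^{2kb}/(1-e^{2kb}); in particular γ depends only on the label b, is negative (for c>0, b<0), and tends to 0 as b→-∞. -/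
/-!
Writing `E = e^{kb}`, the four Lagrangian terms share the denominator `1 - E²`, and the numerator
collapses to `-2kcE²` by `sin²θ + cos²θ = 1`. The vorticity is therefore `g(e^{2kb})` with
`g(q) = -2kcq/(1 - q)`, which is negative for `0 < q < 1` and continuous at `q = 0` with `g(0) = 0`,
while `e^{2kb} → 0` as `b → -∞`.
-/

open Real Filter Topology

lemma lagrangian_vorticity_eq (K E θ : ℝ) :
    -(K * E * sin θ) * (E * sin θ / (1 - E ^ 2)) + K * E * cos θ * ((1 - E * cos θ) / (1 - E ^ 2))
        - K * E * cos θ * ((1 + E * cos θ) / (1 - E ^ 2)) - K * E * sin θ * (E * sin θ / (1 - E ^ 2))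
      = -(2 * K * E ^ 2) / (1 - E ^ 2) := by
  simp only [mul_div_assoc']
  rw [← add_div, ← sub_div, ← sub_div]
  congr 1
  linear_combination (-2 * K * E ^ 2) * sin_sq_add_cos_sq θ

lemma neg_mul_div_one_sub_neg {K q : ℝ} (hK : 0 < K) (hq₀ : 0 < q) (hq₁ : q < 1) :
    -(K * q) / (1 - q) < 0 :=
  div_neg_of_neg_of_pos (neg_neg_of_pos (mul_pos hK hq₀)) (sub_pos.mpr hq₁)

lemma Filter.Tendsto.neg_mul_div_one_sub {α : Type*} {l : Filter α} {f : α → ℝ}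
    (hf : Tendsto f l (𝓝 0)) (K : ℝ) :
    Tendsto (fun x => -(K * f x) / (1 - f x)) l (𝓝 0) := by
  have h : Tendsto (fun x => -(K * f x) / (1 - f x)) l (𝓝 (-(K * 0) / (1 - 0))) :=
    (hf.const_mul K).neg.div (tendsto_const_nhds.sub hf) (by norm_num)
  rwa [mul_zero, neg_zero, zero_div] at h

lemma tendsto_exp_mul_atBot {a : ℝ} (ha : 0 < a) :
    Tendsto (fun b => exp (a * b)) atBot (𝓝 0) :=
  tendsto_exp_atBot.comp (tendsto_id.const_mul_atBot ha)

/-- The vorticity `γ = u_z - w_x = x_{ta}a_z + x_{tb}b_z - z_{ta}a_x - z_{tb}b_x` of the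
Gerstner flow equals `-2kce^{2kb}/(1-e^{2kb})`; it depends only on `b`, is negative, and
tends to `0` as `b → -∞`. -/
theorem gerstner_vorticity (k c : ℝ) (hk : 0 < k) (hc : 0 < c) :
    (∀ b θ : ℝ, b < 0 →
      (-(k * c * Real.exp (k * b) * Real.sin θ)) *
          ((Real.exp (k * b) * Real.sin θ) / (1 - Real.exp (2 * k * b))) +
        (k * c * Real.exp (k * b) * Real.cos θ) *
          ((1 - Real.exp (k * b) * Real.cos θ) / (1 - Real.exp (2 * k * b))) -
        (k * c * Real.exp (k * b) * Real.cos θ) *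
          ((1 + Real.exp (k * b) * Real.cos θ) / (1 - Real.exp (2 * k * b))) -
        (k * c * Real.exp (k * b) * Real.sin θ) *
          ((Real.exp (k * b) * Real.sin θ) / (1 - Real.exp (2 * k * b)))
        = -(2 * k * c * Real.exp (2 * k * b)) / (1 - Real.exp (2 * k * b))) ∧
    (∀ b : ℝ, b < 0 → -(2 * k * c * Real.exp (2 * k * b)) / (1 - Real.exp (2 * k * b)) < 0) ∧
    Filter.Tendsto (fun b : ℝ => -(2 * k * c * Real.exp (2 * k * b)) / (1 - Real.exp (2 * k * b)))
      Filter.atBot (nhds 0) := by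
  refine ⟨fun b θ _ => ?_, fun b hb => ?_, (tendsto_exp_mul_atBot (by positivity)).neg_mul_div_one_sub _⟩
  · have h := lagrangian_vorticity_eq (k * c) (exp (k * b)) θ
    rw [← exp_nat_mul, Nat.cast_ofNat, ← mul_assoc] at h
    linear_combination h
  · exact neg_mul_div_one_sub_neg (by positivity) (exp_pos _)
      (exp_lt_one_iff.mpr (mul_neg_of_pos_of_neg (by positivity) hb))
end
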